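/- arXiv:2309.00484 — 2 statements merged into one kernel-verified Lean document; each statement's English description precedes it below -/
import Mathlib

section
/- The equation A(α, 1−α) = 0, where A(α, 1−α) = 2π (1/(α sin(πα/2)) + 1/((α−1) cos(πα/2))), has infinitely many real roots that are not natural numbers. -/
open Real MeasureTheory

/-- Kummer's confluent hypergeometric function ₁F₁(a;b;z). -/
noncomputable def kummerM (a b z : ℝ) : ℝ :=
  ∑' n : ℕ, ((ascPochhammer ℝ n).eval a * z ^ n) / ((ascPochhammer ℝ n).eval b * (n.factorial : ℝ))

/-- The parabolic cylinder function `U(b, z)`, defined via Kummer functions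
(Abramowitz–Stegun 19.12.1 with `b = -α - 1/2`). -/
noncomputable def pcU (b z : ℝ) : ℝ :=
  let α : ℝ := -b - 1/2
  (1 / Real.sqrt π) * (2 : ℝ) ^ (α / 2) * Real.exp (-z ^ 2 / 4) *
    (Real.cos (π * α / 2) * Real.Gamma ((α + 1) / 2) * kummerM (-α / 2) (1/2) (z ^ 2 / 2) +
      Real.sqrt 2 * z * Real.sin (π * α / 2) * Real.Gamma (α / 2 + 1) *
        kummerM (1/2 - α / 2) (3/2) (z ^ 2 / 2))

/-- Whittaker's form `D_a(z) = U(-a - 1/2, z)`. -/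
noncomputable def pcD (a z : ℝ) : ℝ := pcU (-a - 1/2) z

/-- The power-normalised parabolic cylinder function
`H_α(x,t) = t^{α/2} e^{x²/(4t)} D_α(x/√t)`. -/
noncomputable def Hfrac (α x t : ℝ) : ℝ :=
  t ^ (α / 2) * Real.exp (x ^ 2 / (4 * t)) * pcD α (x / Real.sqrt t)

/-!
Clearing denominators, `A(α, 1 - α) = 0` becomes `g(α) = 0` with
`g(α) = (α - 1) cos(πα/2) + α sin(πα/2)`, as long as neither denominator vanishes.
On `[1 + 4k, 2 + 4k]` the angle `πα/2` runs through `[π/2, π]` modulo `2π`, so `g` goes from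
`1 + 4k` to `-(1 + 4k)` and has a root in the interior, where `sin(πα/2) > 0 > cos(πα/2)`.
For `k < 0` these roots are negative, hence not natural numbers and not `0` or `1`, and
they are unbounded below.
-/

noncomputable def reflectionNumerator (α : ℝ) : ℝ :=
  (α - 1) * cos (π * α / 2) + α * sin (π * α / 2)

lemma continuous_reflectionNumerator : Continuous reflectionNumerator := by
  unfold reflectionNumerator; fun_prop

lemma reflection_eq_zero_iff {α : ℝ} (hs : α * sin (π * α / 2) ≠ 0)
    (hc : (α - 1) * cos (π * α / 2) ≠ 0) :
    2 * π * (1 / (α * sin (π * α / 2)) + 1 / ((α - 1) * cos (π * α / 2))) = 0 ↔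
      reflectionNumerator α = 0 := by
  rw [div_add_div _ _ hs hc, mul_eq_zero, div_eq_zero_iff, reflectionNumerator]
  simp only [pi_ne_zero, mul_ne_zero hs hc, two_ne_zero, mul_eq_zero, false_or, or_false]
  constructor <;> intro h <;> linarith

lemma reflectionNumerator_one_add_four_mul (k : ℤ) :
    reflectionNumerator (1 + 4 * k) = 1 + 4 * k := by
  have h : π * (1 + 4 * k) / 2 = π / 2 + k * (2 * π) := by ring
  rw [reflectionNumerator, h, cos_add_int_mul_two_pi, sin_add_int_mul_two_pi, cos_pi_div_two,
    sin_pi_div_two]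
  ring

lemma reflectionNumerator_two_add_four_mul (k : ℤ) :
    reflectionNumerator (2 + 4 * k) = -(1 + 4 * k) := by
  have h : π * (2 + 4 * k) / 2 = π + k * (2 * π) := by ring
  rw [reflectionNumerator, h, cos_add_int_mul_two_pi, sin_add_int_mul_two_pi, cos_pi, sin_pi]
  ring

lemma exists_reflectionNumerator_eq_zero_mem_Ioo (k : ℤ) :
    ∃ c ∈ Set.Ioo (1 + 4 * k : ℝ) (2 + 4 * k), reflectionNumerator c = 0 := by
  have hle : (1 + 4 * k : ℝ) ≤ 2 + 4 * k := by linarith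
  have hcont : ContinuousOn reflectionNumerator (Set.Icc (1 + 4 * k : ℝ) (2 + 4 * k)) :=
    continuous_reflectionNumerator.continuousOn
  rcases lt_or_ge k 0 with hk | hk
  · have hk' : (k : ℝ) ≤ -1 := by exact_mod_cast Int.le_sub_one_of_lt hk
    refine intermediate_value_Ioo hle hcont ?_
    rw [reflectionNumerator_one_add_four_mul, reflectionNumerator_two_add_four_mul]
    constructor <;> linarith
  · have hk' : (0 : ℝ) ≤ k := by exact_mod_cast hk
    refine intermediate_value_Ioo' hle hcont ?_
    rw [reflectionNumerator_one_add_four_mul, reflectionNumerator_two_add_four_mul]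
    constructor <;> linarith

lemma sin_pos_and_cos_neg_of_mem_Ioo (k : ℤ) {x : ℝ}
    (hx : x ∈ Set.Ioo (1 + 4 * k : ℝ) (2 + 4 * k)) :
    0 < sin (π * x / 2) ∧ cos (π * x / 2) < 0 := by
  obtain ⟨hlo, hhi⟩ := hx
  have hshift : π * x / 2 = π * (x - 4 * k) / 2 + k * (2 * π) := by ring
  rw [hshift, sin_add_int_mul_two_pi, cos_add_int_mul_two_pi]
  have hπ := pi_pos
  constructor
  · exact sin_pos_of_pos_of_lt_pi (by nlinarith) (by nlinarith)
  · exact cos_neg_of_pi_div_two_lt_of_lt (by nlinarith) (by nlinarith)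

theorem stmt7 :
    {α : ℝ | (∀ n : ℕ, α ≠ n) ∧
      2 * π * (1 / (α * Real.sin (π * α / 2)) + 1 / ((α - 1) * Real.cos (π * α / 2))) = 0
      }.Infinite := by
  refine Set.infinite_of_not_bddBelow (not_bddBelow_iff.2 fun b => ?_)
  obtain ⟨k, hk⟩ := exists_int_lt (min (b / 4) 0 - 1)
  have hkb : (k : ℝ) < b / 4 - 1 := hk.trans_le (by linarith [min_le_left (b / 4) 0])
  have hk0 : (k : ℝ) < -1 := hk.trans_le (by linarith [min_le_right (b / 4) 0])
  obtain ⟨c, hc, hroot⟩ := exists_reflectionNumerator_eq_zero_mem_Ioo k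
  obtain ⟨hsin, hcos⟩ := sin_pos_and_cos_neg_of_mem_Ioo k hc
  have hneg : c < 0 := by linarith [hc.2]
  refine ⟨c, ⟨fun n hn => ?_, ?_⟩, by linarith [hc.2]⟩
  · exact (Nat.cast_nonneg n).not_gt (hn ▸ hneg)
  · refine (reflection_eq_zero_iff ?_ ?_).2 hroot
    · exact (mul_neg_of_neg_of_pos hneg hsin).ne
    · exact (mul_pos_of_neg_of_neg (by linarith) hcos).ne'
end

section
/- For any nonnegative integer m, real a, and all z, (d/dz)^m (e^{−z²/4} D_a(z)) = (−1)^m e^{−z²/4} D_{a+m}(z), where D_a is the parabolic cylinder function. -/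
/-!
Write `e^{-z²/4} D_a(z) = c_a e^{-z²/2} S_a(z)` with `c_a = 2^{a/2}/√π`. The entire function
`S_a = ∑ t_a(k) z^k / k!` has `t_a(0) = cos(πa/2) Γ((a+1)/2)`, `t_a(1) = √2 sin(πa/2) Γ(a/2+1)` and
`t_a(k+2) = (k - a) t_a(k)`; its even and odd parts are the two Kummer series in the definition of
`D_a`. The shift identity `√2 t_{a+1}(k+1) = (a+1) t_a(k)` (from `Γ(s+1) = s Γ(s)` and the
quarter-period shift of sine and cosine) gives `S_a' = z S_a - √2 S_{a+1}`, that is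
`(e^{-z²/2} S_a)' = -√2 e^{-z²/2} S_{a+1}`. As `c_{a+1} = √2 c_a`, this is the case `m = 1`, and
induction on `m` finishes the proof.
-/

open Real MeasureTheory

open scoped Nat

theorem hasDerivAt_tsum_mul_pow {c : ℕ → ℝ} (hc : ∀ r : ℝ, Summable fun n => |c n * r ^ n|)
    (z : ℝ) :
    HasDerivAt (fun y => ∑' n, c n * y ^ n) (∑' n, (n + 1) * c (n + 1) * z ^ n) z := by
  set R := |z| + 1
  have hR : 1 ≤ R := by simp [R]
  have hbound : ∀ n : ℕ, |c n| * (n * R ^ (n - 1)) ≤ |c n * (2 * R) ^ n| := by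
    intro n
    rw [abs_mul, abs_of_nonneg (by positivity : (0 : ℝ) ≤ (2 * R) ^ n), mul_pow]
    gcongr
    · exact_mod_cast Nat.lt_two_pow_self.le
    · exact Nat.sub_le n 1
  have hu : Summable fun n => |c n| * (n * R ^ (n - 1)) :=
    .of_nonneg_of_le (fun n => by positivity) hbound (hc (2 * R))
  have hg' : ∀ n, ∀ y ∈ Metric.ball (0 : ℝ) R,
      ‖c n * (n * y ^ (n - 1))‖ ≤ |c n| * (n * R ^ (n - 1)) := by
    intro n y hy
    rw [mem_ball_zero_iff, Real.norm_eq_abs] at hy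
    rw [Real.norm_eq_abs, abs_mul, abs_mul, Nat.abs_cast, abs_pow]
    gcongr
  have hz : z ∈ Metric.ball (0 : ℝ) R := by simp [R]
  have hderiv := hasDerivAt_tsum_of_isPreconnected hu Metric.isOpen_ball
    (convex_ball 0 R).isPreconnected (fun n y _ => (hasDerivAt_pow n y).const_mul (c n))
    hg' hz (hc z).of_abs hz
  have hsummable : Summable fun n => c n * (n * z ^ (n - 1)) :=
    .of_norm_bounded hu fun n => hg' n z hz
  refine hderiv.congr_deriv ?_
  rw [hsummable.tsum_eq_zero_add]
  simp only [Nat.cast_zero, zero_mul, mul_zero, zero_add, Nat.cast_add, Nat.cast_one,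
    Nat.add_sub_cancel]
  exact tsum_congr fun n => by ring

noncomputable def kummerTerm (α β u : ℝ) (n : ℕ) : ℝ :=
  (ascPochhammer ℝ n).eval α * u ^ n / ((ascPochhammer ℝ n).eval β * n !)

lemma kummerTerm_succ (α : ℝ) {β : ℝ} (hβ : 0 < β) (u : ℝ) (n : ℕ) :
    kummerTerm α β u (n + 1) = kummerTerm α β u n * ((α + n) * u / ((β + n) * (n + 1))) := by
  have := (ascPochhammer_pos n β hβ).ne'
  simp only [kummerTerm, ascPochhammer_succ_eval, Nat.factorial_succ, pow_succ, Nat.cast_mul,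
    Nat.cast_succ]
  field_simp

lemma summable_abs_kummerTerm (α : ℝ) {β : ℝ} (hβ : 0 < β) (u : ℝ) :
    Summable fun n => |kummerTerm α β u n| := by
  refine summable_of_ratio_norm_eventually_le (r := 1 / 2) (by norm_num) ?_
  filter_upwards [Filter.eventually_ge_atTop ⌈max |α| (4 * |u|)⌉₊] with n hn
  have hmax : max |α| (4 * |u|) ≤ n := Nat.ceil_le.1 hn
  have hα : |α + n| ≤ 2 * n := by
    have := abs_add_le α n
    rw [Nat.abs_cast] at this
    linarith [le_max_left |α| (4 * |u|)]
  have hu : 4 * |u| ≤ n := le_trans (le_max_right _ _) hmax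
  have hden : (0 : ℝ) < (β + n) * (n + 1) := by positivity
  have hratio : |α + n| * |u| / ((β + n) * (n + 1)) ≤ 1 / 2 := by
    rw [div_le_iff₀ hden]
    nlinarith [abs_nonneg u, abs_nonneg (α + n), (Nat.cast_nonneg n : (0 : ℝ) ≤ n)]
  simp only [Real.norm_eq_abs, abs_abs, kummerTerm_succ α hβ, abs_mul, abs_div,
    abs_of_pos hden]
  calc |kummerTerm α β u n| * (|α + n| * |u| / ((β + n) * (n + 1)))
      ≤ |kummerTerm α β u n| * (1 / 2) := by gcongr
    _ = 1 / 2 * |kummerTerm α β u n| := mul_comm _ _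

lemma hasSum_kummerM (α : ℝ) {β : ℝ} (hβ : 0 < β) (u : ℝ) :
    HasSum (kummerTerm α β u) (kummerM α β u) :=
  (summable_abs_kummerTerm α hβ u).of_abs.hasSum

lemma cast_factorial_two_mul (n : ℕ) :
    ((2 * n)! : ℝ) = 4 ^ n * n ! * (ascPochhammer ℝ n).eval (1 / 2) := by
  induction n with
  | zero => simp
  | succ n ih =>
    rw [show 2 * (n + 1) = 2 * n + 1 + 1 by ring, Nat.factorial_succ, Nat.factorial_succ,
      Nat.factorial_succ, ascPochhammer_succ_eval]
    push_cast
    rw [ih]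
    ring

lemma cast_factorial_two_mul_add_one (n : ℕ) :
    ((2 * n + 1)! : ℝ) = 4 ^ n * n ! * (ascPochhammer ℝ n).eval (3 / 2) := by
  induction n with
  | zero => simp
  | succ n ih =>
    rw [show 2 * (n + 1) + 1 = 2 * n + 1 + 1 + 1 by ring, Nat.factorial_succ, Nat.factorial_succ,
      Nat.factorial_succ n, ascPochhammer_succ_eval]
    push_cast
    rw [ih]
    ring

noncomputable def pcEvenCoeff (a : ℝ) : ℝ := cos (π * a / 2) * Gamma ((a + 1) / 2)

noncomputable def pcOddCoeff (a : ℝ) : ℝ := √2 * sin (π * a / 2) * Gamma (a / 2 + 1)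

-- The Taylor coefficients at `0` of `e^{z²/4} D_a(z) / pcScale a`.
noncomputable def pcTaylorCoeff (a : ℝ) : ℕ → ℝ
  | 0 => pcEvenCoeff a
  | 1 => pcOddCoeff a
  | k + 2 => (k - a) * pcTaylorCoeff a k

noncomputable def pcScale (a : ℝ) : ℝ := 1 / √π * 2 ^ (a / 2)

noncomputable def pcSeries (a z : ℝ) : ℝ := ∑' k, pcTaylorCoeff a k / k ! * z ^ k

lemma sqrt_two_mul_pcOddCoeff_add_one (a : ℝ) :
    √2 * pcOddCoeff (a + 1) = (a + 1) * pcEvenCoeff a := by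
  have hsqrt : √2 * √2 = 2 := Real.mul_self_sqrt zero_le_two
  rw [pcOddCoeff, pcEvenCoeff, show π * (a + 1) / 2 = π * a / 2 + π / 2 by ring, sin_add_pi_div_two]
  rcases eq_or_ne a (-1) with rfl | ha
  · simp [neg_div]
  · rw [Gamma_add_one (by contrapose! ha; linarith)]
    linear_combination (cos (π * a / 2) * Gamma ((a + 1) / 2) * (a + 1) / 2) * hsqrt

lemma sqrt_two_mul_pcEvenCoeff_add_one (a : ℝ) : √2 * pcEvenCoeff (a + 1) = -pcOddCoeff a := by
  rw [pcOddCoeff, pcEvenCoeff, show π * (a + 1) / 2 = π * a / 2 + π / 2 by ring,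
    cos_add_pi_div_two, show (a + 1 + 1) / 2 = a / 2 + 1 by ring]
  ring

lemma sqrt_two_mul_pcTaylorCoeff_add_one (a : ℝ) (k : ℕ) :
    √2 * pcTaylorCoeff (a + 1) (k + 1) = (a + 1) * pcTaylorCoeff a k := by
  induction k using Nat.twoStepInduction with
  | zero => exact sqrt_two_mul_pcOddCoeff_add_one a
  | one =>
    simp only [pcTaylorCoeff]
    linear_combination (-(a + 1)) * sqrt_two_mul_pcEvenCoeff_add_one a
  | more k ih _ =>
    simp only [pcTaylorCoeff] at ih ⊢
    push_cast
    linear_combination (k - a) * ih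

lemma pcTaylorCoeff_two_mul (a : ℝ) (n : ℕ) :
    pcTaylorCoeff a (2 * n) = 2 ^ n * (ascPochhammer ℝ n).eval (-a / 2) * pcEvenCoeff a := by
  induction n with
  | zero => simp [pcTaylorCoeff]
  | succ n ih =>
    rw [show 2 * (n + 1) = 2 * n + 2 by ring, pcTaylorCoeff, ih, ascPochhammer_succ_eval]
    push_cast
    ring

lemma pcTaylorCoeff_two_mul_add_one (a : ℝ) (n : ℕ) :
    pcTaylorCoeff a (2 * n + 1) =
      2 ^ n * (ascPochhammer ℝ n).eval (1 / 2 - a / 2) * pcOddCoeff a := by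
  induction n with
  | zero => simp [pcTaylorCoeff]
  | succ n ih =>
    rw [show 2 * (n + 1) + 1 = 2 * n + 1 + 2 by ring, pcTaylorCoeff, ih, ascPochhammer_succ_eval]
    push_cast
    ring

lemma pcTaylorTerm_two_mul (a z : ℝ) (n : ℕ) :
    pcTaylorCoeff a (2 * n) / (2 * n)! * z ^ (2 * n) =
      pcEvenCoeff a * kummerTerm (-a / 2) (1 / 2) (z ^ 2 / 2) n := by
  have := (ascPochhammer_pos n (1 / 2 : ℝ) (by norm_num)).ne'
  rw [pcTaylorCoeff_two_mul, cast_factorial_two_mul, kummerTerm, pow_mul, div_pow,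
    show (4 : ℝ) ^ n = 2 ^ n * 2 ^ n by rw [← mul_pow]; norm_num]
  field_simp

lemma pcTaylorTerm_two_mul_add_one (a z : ℝ) (n : ℕ) :
    pcTaylorCoeff a (2 * n + 1) / (2 * n + 1)! * z ^ (2 * n + 1) =
      pcOddCoeff a * z * kummerTerm (1 / 2 - a / 2) (3 / 2) (z ^ 2 / 2) n := by
  have := (ascPochhammer_pos n (3 / 2 : ℝ) (by norm_num)).ne'
  rw [pcTaylorCoeff_two_mul_add_one, cast_factorial_two_mul_add_one, kummerTerm, pow_succ,
    pow_mul, div_pow, show (4 : ℝ) ^ n = 2 ^ n * 2 ^ n by rw [← mul_pow]; norm_num]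
  field_simp

lemma hasSum_pcSeries (a z : ℝ) :
    HasSum (fun k => pcTaylorCoeff a k / k ! * z ^ k)
      (pcEvenCoeff a * kummerM (-a / 2) (1 / 2) (z ^ 2 / 2) +
        pcOddCoeff a * z * kummerM (1 / 2 - a / 2) (3 / 2) (z ^ 2 / 2)) := by
  refine HasSum.even_add_odd ?_ ?_
  · simpa only [pcTaylorTerm_two_mul] using
      (hasSum_kummerM (-a / 2) one_half_pos (z ^ 2 / 2)).mul_left (pcEvenCoeff a)
  · simpa only [pcTaylorTerm_two_mul_add_one] using
      (hasSum_kummerM (1 / 2 - a / 2) (by norm_num) (z ^ 2 / 2)).mul_left (pcOddCoeff a * z)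

lemma summable_abs_pcTaylorTerm (a r : ℝ) :
    Summable fun k => |pcTaylorCoeff a k / k ! * r ^ k| := by
  refine Summable.even_add_odd ?_ ?_
  · simpa only [pcTaylorTerm_two_mul, abs_mul] using
      (summable_abs_kummerTerm (-a / 2) one_half_pos (r ^ 2 / 2)).mul_left |pcEvenCoeff a|
  · simpa only [pcTaylorTerm_two_mul_add_one, abs_mul] using
      (summable_abs_kummerTerm (1 / 2 - a / 2) (by norm_num) (r ^ 2 / 2)).mul_left
        |pcOddCoeff a * r|

lemma hasSum_deriv_pcSeries (a z : ℝ) :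
    HasSum (fun k => pcTaylorCoeff a (k + 1) / k ! * z ^ k)
      (z * pcSeries a z - √2 * pcSeries (a + 1) z) := by
  have hS (b : ℝ) : HasSum (fun k => pcTaylorCoeff b k / k ! * z ^ k) (pcSeries b z) :=
    (summable_abs_pcTaylorTerm b z).of_abs.hasSum
  -- the coefficients of `z S_a` are `(k+1) t_a(k) = t_a(k+2) + √2 t_{a+1}(k+1)`
  have hshift : HasSum (fun k => pcTaylorCoeff a (k + 1) / k ! * z ^ k +
      √2 * (pcTaylorCoeff (a + 1) k / k ! * z ^ k)) (z * pcSeries a z) := by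
    refine (hasSum_nat_add_iff' 1).1 ?_
    simp only [Finset.range_one, Finset.sum_singleton, pcTaylorCoeff, Nat.factorial_zero,
      Nat.cast_one, div_one, pow_zero, mul_one, sqrt_two_mul_pcEvenCoeff_add_one, add_neg_cancel,
      sub_zero]
    refine ((hS a).mul_left z).congr_fun fun k => ?_
    have hrec : √2 * (pcTaylorCoeff (a + 1) (k + 1) / (k + 1)! * z ^ (k + 1)) =
        (a + 1) * pcTaylorCoeff a k / (k + 1)! * z ^ (k + 1) := by
      rw [← sqrt_two_mul_pcTaylorCoeff_add_one]
      ring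
    rw [hrec, Nat.factorial_succ]
    push_cast
    field_simp
    ring
  simpa only [add_sub_cancel_right] using hshift.sub ((hS (a + 1)).mul_left √2)

lemma hasDerivAt_pcSeries (a z : ℝ) :
    HasDerivAt (pcSeries a) (z * pcSeries a z - √2 * pcSeries (a + 1) z) z := by
  have h := hasDerivAt_tsum_mul_pow (summable_abs_pcTaylorTerm a) z
  refine h.congr_deriv (HasSum.tsum_eq ((hasSum_deriv_pcSeries a z).congr_fun fun k => ?_))
  rw [Nat.factorial_succ]
  push_cast
  field_simp

lemma pcScale_add_one (a : ℝ) : pcScale (a + 1) = √2 * pcScale a := by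
  rw [pcScale, pcScale, add_div, rpow_add two_pos, ← sqrt_eq_rpow]
  ring

lemma exp_mul_pcD (a z : ℝ) :
    exp (-z ^ 2 / 4) * pcD a z = pcScale a * (exp (-z ^ 2 / 2) * pcSeries a z) := by
  have hexp : exp (-z ^ 2 / 2) = exp (-z ^ 2 / 4) * exp (-z ^ 2 / 4) := by
    rw [← exp_add]; ring_nf
  rw [pcD, pcU, pcSeries, (hasSum_pcSeries a z).tsum_eq, hexp, pcScale, pcEvenCoeff, pcOddCoeff,
    show -(-a - 1 / 2) - 1 / 2 = a by ring]
  ring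

lemma hasDerivAt_exp_mul_pcD (a z : ℝ) :
    HasDerivAt (fun w => exp (-w ^ 2 / 4) * pcD a w) (-(exp (-z ^ 2 / 4) * pcD (a + 1) z)) z := by
  have hexp : HasDerivAt (fun w => exp (-w ^ 2 / 2)) (-z * exp (-z ^ 2 / 2)) z := by
    refine ((hasDerivAt_pow 2 z).neg.div_const 2).exp.congr_deriv ?_
    norm_num
    ring
  simp only [exp_mul_pcD, pcScale_add_one]
  refine ((hexp.mul (hasDerivAt_pcSeries a z)).const_mul (pcScale a)).congr_deriv ?_
  ring

theorem stmt9 (m : ℕ) (a z : ℝ) :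
    iteratedDeriv m (fun w : ℝ => Real.exp (-w ^ 2 / 4) * pcD a w) z
      = (-1) ^ m * Real.exp (-z ^ 2 / 4) * pcD (a + m) z := by
  induction m generalizing a z with
  | zero => simp
  | succ m ih =>
    have hderiv : deriv (fun w => exp (-w ^ 2 / 4) * pcD a w) =
        fun w => -(exp (-w ^ 2 / 4) * pcD (a + 1) w) :=
      funext fun w => (hasDerivAt_exp_mul_pcD a w).deriv
    rw [iteratedDeriv_succ', hderiv, iteratedDeriv_fun_neg, ih]
    rw [show a + 1 + (m : ℝ) = a + (m + 1 : ℕ) by push_cast; ring]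
    ring
end
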